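/- arXiv:1101.2695 — 7 statements merged into one kernel-verified Lean document; each statement's English description precedes it below -/
import Mathlib

section
/- Let l, m, l′, m′ be unit complex numbers. There exists A ∈ SU(2) with A·diag(l, l⁻¹)·A⁻¹ = diag(l′, l′⁻¹) and A·diag(m, m⁻¹)·A⁻¹ = diag(m′, m′⁻¹) if and only if (l′, m′) = (l, m) or (l′, m′) = (l⁻¹, m⁻¹). -/
/-!
If `A * D * A⁻¹ = D'` with `D = diagonal d`, `D' = diagonal d'`, then `A * D = D' * A`, which
read entrywise says `A i j * d j = d' i * A i j`; so every nonzero entry `A i j` forces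
`d' i = d j`. Row `0` of an invertible `A` has a nonzero entry: in column `0` this gives
`(l', m') = (l, m)`, in column `1` it gives `(l', m') = (l⁻¹, m⁻¹)`. Both cases occur, through
`1` and through the Weyl element `!![0, 1; -1, 0]`, which swaps the diagonal entries.
-/

open Matrix

namespace Matrix

variable {n R : Type*} [Fintype n] [DecidableEq n] [CommRing R]

theorem exists_ne_zero_of_det_ne_zero {A : Matrix n n R} (hA : A.det ≠ 0) (i : n) :
    ∃ j, A i j ≠ 0 := by
  by_contra! h
  exact hA (det_eq_zero_of_row_eq_zero i h)

theorem diagonal_apply_eq_of_conj_eq_diagonal [IsDomain R] {A : Matrix n n R} {d d' : n → R}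
    (hA : IsUnit A.det) (h : A * diagonal d * A⁻¹ = diagonal d') {i j : n} (hij : A i j ≠ 0) :
    d' i = d j := by
  have hcomm : A * diagonal d = diagonal d' * A := by
    rw [← h, nonsing_inv_mul_cancel_right _ _ hA]
  have hentry := congrFun (congrFun hcomm i) j
  rw [mul_diagonal, diagonal_mul, mul_comm] at hentry
  exact (mul_right_cancel₀ hij hentry).symm

end Matrix

section Swap

variable {R : Type*} [CommRing R]

def weylSU2 : Matrix (Fin 2) (Fin 2) R := !![0, 1; -1, 0]

theorem weylSU2_inv : (weylSU2 : Matrix (Fin 2) (Fin 2) R)⁻¹ = -weylSU2 :=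
  inv_eq_right_inv (by simp [weylSU2, one_fin_two])

theorem weylSU2_mem_specialUnitaryGroup [StarRing R] :
    (weylSU2 : Matrix (Fin 2) (Fin 2) R) ∈ specialUnitaryGroup (Fin 2) R := by
  refine mem_specialUnitaryGroup_iff.2 ⟨mem_unitaryGroup_iff.2 ?_, by simp [weylSU2, det_fin_two]⟩
  ext i j
  fin_cases i <;> fin_cases j <;> simp [weylSU2, mul_apply]

theorem weylSU2_conj_diagonal (x y : R) :
    weylSU2 * diagonal ![x, y] * weylSU2⁻¹ = diagonal ![y, x] := by
  rw [weylSU2_inv]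
  ext i j
  fin_cases i <;> fin_cases j <;> simp [weylSU2, mul_apply, vecMul_diagonal]

end Swap

theorem stmt8_general (l m l' m' : ℂ) :
    (∃ A ∈ Matrix.specialUnitaryGroup (Fin 2) ℂ,
        A * Matrix.diagonal ![l, l⁻¹] * A⁻¹ = Matrix.diagonal ![l', l'⁻¹] ∧
        A * Matrix.diagonal ![m, m⁻¹] * A⁻¹ = Matrix.diagonal ![m', m'⁻¹]) ↔
      ((l' = l ∧ m' = m) ∨ (l' = l⁻¹ ∧ m' = m⁻¹)) := by
  constructor
  · rintro ⟨A, hA, hconj_l, hconj_m⟩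
    have hdet : IsUnit A.det := by
      rw [(mem_specialUnitaryGroup_iff.1 hA).2]
      exact isUnit_one
    obtain ⟨j, hj⟩ := exists_ne_zero_of_det_ne_zero hdet.ne_zero 0
    have hl_eq := diagonal_apply_eq_of_conj_eq_diagonal hdet hconj_l hj
    have hm_eq := diagonal_apply_eq_of_conj_eq_diagonal hdet hconj_m hj
    fin_cases j
    · exact Or.inl ⟨hl_eq, hm_eq⟩
    · exact Or.inr ⟨hl_eq, hm_eq⟩
  · rintro (⟨rfl, rfl⟩ | ⟨rfl, rfl⟩)
    · exact ⟨1, one_mem _, by simp, by simp⟩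
    · refine ⟨weylSU2, weylSU2_mem_specialUnitaryGroup, ?_, ?_⟩ <;>
        rw [inv_inv, weylSU2_conj_diagonal]

/-- Two pairs of diagonal `SU(2)` matrices `(diag(l,l⁻¹), diag(m,m⁻¹))` and
`(diag(l′,l′⁻¹), diag(m′,m′⁻¹))` are simultaneously conjugate in `SU(2)` if and
only if `(l′,m′) = (l,m)` or `(l′,m′) = (l⁻¹,m⁻¹)`: this is the identification of
characters of `ℤ × ℤ` with the pillowcase. -/
theorem stmt8 (l m l' m' : ℂ) (hl : ‖l‖ = 1) (hm : ‖m‖ = 1)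
    (hl' : ‖l'‖ = 1) (hm' : ‖m'‖ = 1) :
    (∃ A ∈ Matrix.specialUnitaryGroup (Fin 2) ℂ,
        A * Matrix.diagonal ![l, l⁻¹] * A⁻¹ = Matrix.diagonal ![l', l'⁻¹] ∧
        A * Matrix.diagonal ![m, m⁻¹] * A⁻¹ = Matrix.diagonal ![m', m'⁻¹]) ↔
      ((l' = l ∧ m' = m) ∨ (l' = l⁻¹ ∧ m' = m⁻¹)) :=
  stmt8_general l m l' m'
end

section
/- Let l, m be complex numbers of modulus 1 with m¹² ≠ 1. Then l + l⁻¹ + m⁶ + m⁻⁶ = 0 and l·m + l⁻¹·m⁻¹ + m⁵ + m⁻⁵ = 0 hold simultaneously if and only if l = −m⁻⁶. -/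
/-!
The first generator factors as `(l + m⁶)(l m⁶ + 1) / (l m⁶)`, so it vanishes exactly when
`l = -m⁶` or `l = -m⁻⁶`. On the branch `l = -m⁶` the second generator becomes
`-(m¹² - 1)(m² - 1) / m⁷`, which is nonzero when `m¹² ≠ 1`; on the branch `l = -m⁻⁶` it
vanishes identically.
-/

theorem add_inv_add_add_inv_eq_zero_iff {K : Type*} [Field K] {x a : K} (hx : x ≠ 0)
    (ha : a ≠ 0) : x + x⁻¹ + a + a⁻¹ = 0 ↔ x = -a ∨ x = -a⁻¹ := by
  have hfactor : x + x⁻¹ + a + a⁻¹ = (x + a) * (x * a + 1) / (x * a) := by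
    field_simp
    ring
  have hsecond : x * a + 1 = (x + a⁻¹) * a := by
    field_simp
  rw [hfactor, div_eq_zero_iff, or_iff_left (mul_ne_zero hx ha), mul_eq_zero,
    add_eq_zero_iff_eq_neg, hsecond, mul_eq_zero, or_iff_left ha, add_eq_zero_iff_eq_neg]

theorem pow_twelve_eq_one_of_second_generator_eq_zero {K : Type*} [Field K] {m : K}
    (hm : m ≠ 0) (h : -m ^ 6 * m + (-m ^ 6)⁻¹ * m⁻¹ + m ^ 5 + (m ^ 5)⁻¹ = 0) :
    m ^ 12 = 1 := by
  have hfactor : (m ^ 12 - 1) * (m ^ 2 - 1) = 0 := by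
    field_simp at h
    linear_combination -h
  rcases mul_eq_zero.1 hfactor with h12 | h2
  · exact sub_eq_zero.1 h12
  · rw [show 12 = 2 * 6 by rfl, pow_mul, sub_eq_zero.1 h2, one_pow]

theorem generators_vanish_at_neg_inv_pow_six {K : Type*} [Field K] {m : K}
    (hm : m ≠ 0) :
    -(m ^ 6)⁻¹ + (-(m ^ 6)⁻¹)⁻¹ + m ^ 6 + (m ^ 6)⁻¹ = 0 ∧
      -(m ^ 6)⁻¹ * m + (-(m ^ 6)⁻¹)⁻¹ * m⁻¹ + m ^ 5 + (m ^ 5)⁻¹ = 0 := by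
  simp only [inv_neg, inv_inv]
  constructor
  · ring
  · field_simp
    ring

/-- For unit complex numbers `l, m` with `m¹² ≠ 1`, the two generators of the
`A`-ideal of the trefoil vanish simultaneously if and only if the `A`-polynomial
relation `l = −m⁻⁶` holds. -/
theorem stmt10 (l m : ℂ) (hl : ‖l‖ = 1) (hm : ‖m‖ = 1) (h12 : m ^ 12 ≠ 1) :
    (l + l⁻¹ + m ^ 6 + (m ^ 6)⁻¹ = 0 ∧
      l * m + l⁻¹ * m⁻¹ + m ^ 5 + (m ^ 5)⁻¹ = 0) ↔ l = -(m ^ 6)⁻¹ := by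
  have hl0 : l ≠ 0 := norm_ne_zero_iff.1 (by simp [hl])
  have hm0 : m ≠ 0 := norm_ne_zero_iff.1 (by simp [hm])
  constructor
  · rintro ⟨h1, h2⟩
    rcases (add_inv_add_add_inv_eq_zero_iff hl0 (pow_ne_zero 6 hm0)).1 h1 with rfl | rfl
    · exact absurd (pow_twelve_eq_one_of_second_generator_eq_zero hm0 h2) h12
    · rfl
  · rintro rfl
    exact generators_vanish_at_neg_inv_pow_six hm0
end

section
/- Let X, Y ∈ SU(2) (2 × 2 special unitary matrices over ℂ) satisfy X² = Y³. If there is no nonzero vector v ∈ ℂ² that is simultaneously an eigenvector of X and of Y, then X² = Y³ = −I, the negative of the identity matrix. -/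
/-! The matrix `Z = X² = Y³` commutes with `X` and `Y`. If `Z` were not scalar, its eigenspaces
would be lines, so an eigenvector of `Z` would be a common eigenvector of `X` and `Y`. Hence
`Z = c • 1` with `c² = det Z = 1`. If `c = 1`, then `X` is scalar, because `X² = 1` and `det X = 1`
make `X` equal to its adjugate `X⁻¹`; then any eigenvector of `Y` is a common one. So `c = -1`. -/

open Matrix Module

namespace Matrix

theorem exists_eigenvector {n K : Type*} [Fintype n] [DecidableEq n] [Nonempty n]
    [Field K] [IsAlgClosed K] (M : Matrix n n K) :
    ∃ v : n → K, v ≠ 0 ∧ ∃ c : K, M *ᵥ v = c • v := by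
  obtain ⟨c, hc⟩ := End.exists_eigenvalue (toLin' M)
  obtain ⟨v, hv⟩ := hc.exists_hasEigenvector
  exact ⟨v, hv.2, c, by simpa using hv.apply_eq_smul⟩

theorem eigenspace_toLin'_ne_top {n K : Type*} [Fintype n] [DecidableEq n] [Field K]
    {M : Matrix n n K} {c : K} (hM : M ≠ c • 1) : End.eigenspace (toLin' M) c ≠ ⊤ := by
  intro htop
  refine hM (toLin'.injective (LinearMap.ext fun v => ?_))
  have hv : v ∈ End.eigenspace (toLin' M) c := htop ▸ Submodule.mem_top
  simpa [End.mem_eigenspace_iff] using hv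

theorem exists_mulVec_eq_smul_of_commute {K : Type*} [Field K]
    {Z W : Matrix (Fin 2) (Fin 2) K} (hZW : Commute Z W) {c : K} (hZ : Z ≠ c • 1)
    {v : Fin 2 → K} (hv : v ≠ 0) (hZv : Z *ᵥ v = c • v) : ∃ a : K, W *ᵥ v = a • v := by
  set E := End.eigenspace (toLin' Z) c
  have hvE : v ∈ E := by simpa [E, End.mem_eigenspace_iff] using hZv
  have hWvE : W *ᵥ v ∈ E := by
    simp only [E, End.mem_eigenspace_iff, toLin'_apply, mulVec_mulVec, hZW.eq]
    rw [← mulVec_mulVec, hZv, mulVec_smul]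
  have hE : finrank K E ≤ 1 := by
    have : finrank K E < 2 := by simpa using Submodule.finrank_lt (eigenspace_toLin'_ne_top hZ)
    omega
  have hline : K ∙ v = E :=
    Submodule.eq_of_le_of_finrank_le ((Submodule.span_singleton_le_iff_mem v E).2 hvE)
      (by rw [finrank_span_singleton hv]; exact hE)
  obtain ⟨a, ha⟩ := Submodule.mem_span_singleton.1 (hline ▸ hWvE)
  exact ⟨a, ha.symm⟩

theorem eq_smul_one_of_sq_eq_one_of_det_eq_one {K : Type*} [Field K] [NeZero (2 : K)]
    {X : Matrix (Fin 2) (Fin 2) K} (hX : X ^ 2 = 1) (hdet : X.det = 1) :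
    ∃ a : K, X = a • 1 := by
  have hadj : adjugate X = X := by
    calc adjugate X = X * X * adjugate X := by rw [← sq, hX, one_mul]
      _ = X := by rw [mul_assoc, mul_adjugate, hdet, one_smul, mul_one]
  have eq_zero_of_neg_eq {x : K} (hx : -x = x) : x = 0 :=
    (mul_eq_zero.1 (by linear_combination -hx : (2 : K) * x = 0)).resolve_left two_ne_zero
  have h01 := congrFun₂ hadj 0 1
  have h10 := congrFun₂ hadj 1 0
  have h11 := congrFun₂ hadj 1 1
  simp only [adjugate_fin_two, of_apply, cons_val', cons_val_zero, cons_val_one, empty_val',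
    cons_val_fin_one] at h01 h10 h11
  refine ⟨X 0 0, ?_⟩
  ext i j
  fin_cases i <;> fin_cases j <;> simp [eq_zero_of_neg_eq h01, eq_zero_of_neg_eq h10, h11]

end Matrix

theorem stmt12_general (X Y : Matrix (Fin 2) (Fin 2) ℂ)
    (hX : X ∈ Matrix.specialUnitaryGroup (Fin 2) ℂ)
    (h : X ^ 2 = Y ^ 3)
    (hirr : ¬ ∃ v : Fin 2 → ℂ, v ≠ 0 ∧
      (∃ a : ℂ, X.mulVec v = a • v) ∧ (∃ b : ℂ, Y.mulVec v = b • v)) :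
    X ^ 2 = -1 ∧ Y ^ 3 = -1 := by
  have hdet : X.det = 1 := (mem_specialUnitaryGroup_iff.1 hX).2
  obtain ⟨v, hv, c, hXv⟩ := exists_eigenvector (X ^ 2)
  have hscalar : X ^ 2 = c • 1 := by
    by_contra hZ
    refine hirr ⟨v, hv, exists_mulVec_eq_smul_of_commute (Commute.self_pow X 2).symm hZ hv hXv, ?_⟩
    exact exists_mulVec_eq_smul_of_commute (h ▸ (Commute.self_pow Y 3).symm) hZ hv hXv
  have hc : c = 1 ∨ c = -1 := by
    have hdet_sq : (X ^ 2).det = 1 := by rw [det_pow, hdet, one_pow]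
    simpa [hscalar, det_smul] using hdet_sq
  obtain rfl | rfl := hc
  · rw [one_smul] at hscalar
    obtain ⟨a, rfl⟩ := eq_smul_one_of_sq_eq_one_of_det_eq_one hscalar hdet
    obtain ⟨w, hw, b, hYw⟩ := exists_eigenvector Y
    exact (hirr ⟨w, hw, ⟨a, by rw [smul_mulVec, one_mulVec]⟩, b, hYw⟩).elim
  · rw [← h, hscalar, neg_one_smul]
    exact ⟨rfl, rfl⟩

/-- If `X, Y ∈ SU(2)` satisfy `X² = Y³` and have no common eigenvector in `ℂ²`
(i.e. the corresponding representation of the trefoil group is irreducible), then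
`X² = Y³ = −I`. -/
theorem stmt12 (X Y : Matrix (Fin 2) (Fin 2) ℂ)
    (hX : X ∈ Matrix.specialUnitaryGroup (Fin 2) ℂ)
    (hY : Y ∈ Matrix.specialUnitaryGroup (Fin 2) ℂ)
    (h : X ^ 2 = Y ^ 3)
    (hirr : ¬ ∃ v : Fin 2 → ℂ, v ≠ 0 ∧
      (∃ a : ℂ, X.mulVec v = a • v) ∧ (∃ b : ℂ, Y.mulVec v = b • v)) :
    X ^ 2 = -1 ∧ Y ^ 3 = -1 :=
  stmt12_general X Y hX h hirr
end

section
/- For unit quaternions A, B and parameters s, t ∈ (0, π), define β(A, t) = (A i A⁻¹, A(cos(π/3) + sin(π/3)(cos(t) i + sin(t) j))A⁻¹). Then β(A, t) = β(B, s) if and only if t = s and B = A or B = −A. -/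
open Real
open scoped Quaternion

/-- The quaternion `i`. -/
def quatI : ℍ[ℝ] := ⟨0, 1, 0, 0⟩

/-- The quaternion `cos(π/3) + sin(π/3)(cos(t) i + sin(t) j)`. -/
noncomputable def quatY (t : ℝ) : ℍ[ℝ] :=
  ⟨Real.cos (π / 3), Real.sin (π / 3) * Real.cos t, Real.sin (π / 3) * Real.sin t, 0⟩

/-!
Writing `C = B⁻¹ A`, the equation `β(A, t) = β(B, s)` says that `C` commutes with `i` and
conjugates `y_t = quatY t` into `y_s`. Commuting with `i` forces `C = a + b i`. Conjugation by
`a + b i` fixes the real and `i`-parts of `y_t`, so `cos t = cos s`, hence `t = s`; it rotates the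
`jk`-plane by twice the argument of `a + b i`, and it must carry the nonzero `j`-part of `y_t`
(`sin t ≠ 0`) to that of `y_s`, which has no `k`-part; this forces `b = 0`.
So `C` is a real unit quaternion, i.e. `C = ±1`.
-/

theorem conj_eq_conj_iff_commute {G₀ : Type*} [GroupWithZero G₀] {a b x y : G₀}
    (ha : a ≠ 0) (hb : b ≠ 0) :
    a * x * a⁻¹ = b * y * b⁻¹ ↔ b⁻¹ * a * x = y * (b⁻¹ * a) := by
  rw [mul_inv_eq_iff_eq_mul₀ ha]
  simp only [mul_assoc]
  rw [inv_mul_eq_iff_eq_mul₀ hb]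

theorem mul_quatI_eq_quatI_mul_iff (C : ℍ[ℝ]) :
    C * quatI = quatI * C ↔ C.imJ = 0 ∧ C.imK = 0 := by
  simp only [Quaternion.ext_iff, Quaternion.re_mul, Quaternion.imI_mul, Quaternion.imJ_mul,
    Quaternion.imK_mul]
  simp only [quatI]
  constructor
  · rintro ⟨-, -, hJ, hK⟩
    constructor <;> linarith
  · rintro ⟨hJ, hK⟩
    simp [hJ, hK]

theorem eq_and_imI_eq_zero_of_mul_quatY_eq_quatY_mul {C : ℍ[ℝ]} {t s : ℝ}
    (hJ : C.imJ = 0) (hK : C.imK = 0) (hC : C.re ^ 2 + C.imI ^ 2 = 1)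
    (ht : t ∈ Set.Ioo 0 π) (hs : s ∈ Set.Ioo 0 π) (h : C * quatY t = quatY s * C) :
    t = s ∧ C.imI = 0 := by
  have hd : sin (π / 3) ≠ 0 := by rw [Real.sin_pi_div_three]; positivity
  obtain ⟨hre, hI, -, hK'⟩ := Quaternion.ext_iff.mp h
  simp only [Quaternion.re_mul, Quaternion.imI_mul, Quaternion.imK_mul, hJ, hK] at hre hI hK'
  simp only [quatY] at hre hI hK'
  have hcos : cos t = cos s := by
    have : sin (π / 3) * (cos t - cos s) = 0 := by
      linear_combination -C.imI * hre + C.re * hI - sin (π / 3) * (cos t - cos s) * hC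
    linarith [(mul_eq_zero.mp this).resolve_left hd]
  have hts : t = s := Real.injOn_cos (Set.Ioo_subset_Icc_self ht) (Set.Ioo_subset_Icc_self hs) hcos
  subst hts
  have hsin : sin t ≠ 0 := (Real.sin_pos_of_pos_of_lt_pi ht.1 ht.2).ne'
  refine ⟨rfl, ?_⟩
  have : sin (π / 3) * sin t * C.imI = 0 := by linear_combination hK' / 2
  simpa [hd, hsin] using this

theorem Quaternion.eq_one_or_eq_neg_one_of_normSq_eq_one {R : Type*} [CommRing R]
    [NoZeroDivisors R] {C : ℍ[R]} (hC : normSq C = 1)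
    (hI : C.imI = 0) (hJ : C.imJ = 0) (hK : C.imK = 0) : C = 1 ∨ C = -1 := by
  have hre : C = (C.re : ℍ[R]) := by ext <;> simp [hI, hJ, hK]
  rw [hre, normSq_coe, sq_eq_one_iff] at hC
  rcases hC with h | h
  · left; rw [hre, h, coe_one]
  · right; rw [hre, h, coe_neg, coe_one]

/-- The parametrization `β(A,t) = (A i A⁻¹, A(cos(π/3)+sin(π/3)(cos t i + sin t j))A⁻¹)`
of the irreducible representations of the trefoil group is exactly two-to-one:
`β(A,t) = β(B,s)` iff `t = s` and `B = ±A`. -/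
theorem stmt13 (A B : ℍ[ℝ]) (hA : ‖A‖ = 1) (hB : ‖B‖ = 1)
    (t s : ℝ) (ht : t ∈ Set.Ioo 0 π) (hs : s ∈ Set.Ioo 0 π) :
    (A * quatI * A⁻¹ = B * quatI * B⁻¹ ∧ A * quatY t * A⁻¹ = B * quatY s * B⁻¹) ↔
      (t = s ∧ (B = A ∨ B = -A)) := by
  have hA0 : A ≠ 0 := norm_ne_zero_iff.mp (by simp [hA])
  have hB0 : B ≠ 0 := norm_ne_zero_iff.mp (by simp [hB])
  refine ⟨fun ⟨hi, hy⟩ => ?_, ?_⟩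
  · rw [conj_eq_conj_iff_commute hA0 hB0] at hi hy
    set C := B⁻¹ * A with hC
    have hCnorm : Quaternion.normSq C = 1 := by
      rw [Quaternion.normSq_eq_norm_mul_self, hC, norm_mul, norm_inv, hA, hB]; norm_num
    obtain ⟨hJ, hK⟩ := (mul_quatI_eq_quatI_mul_iff C).mp hi
    have hC2 : C.re ^ 2 + C.imI ^ 2 = 1 := by
      rw [Quaternion.normSq_def', hJ, hK] at hCnorm; linarith
    obtain ⟨rfl, hI⟩ := eq_and_imI_eq_zero_of_mul_quatY_eq_quatY_mul hJ hK hC2 ht hs hy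
    rcases Quaternion.eq_one_or_eq_neg_one_of_normSq_eq_one hCnorm hI hJ hK with h | h
    · exact ⟨rfl, .inl ((inv_mul_eq_one₀ hB0).mp h)⟩
    · refine ⟨rfl, .inr ?_⟩
      rw [inv_mul_eq_iff_eq_mul₀ hB0, mul_neg_one] at h
      rw [h, neg_neg]
  · rintro ⟨rfl, rfl | rfl⟩
    · exact ⟨rfl, rfl⟩
    · simp only [neg_mul, mul_neg, inv_neg, neg_neg, and_self]
end

section
/- Let p and q be pure unit quaternions (purely imaginary quaternions of norm 1). Then there exist a unit quaternion A and t ∈ [0, π] such that A i A⁻¹ = p and A(cos(t) i + sin(t) j)A⁻¹ = q. -/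
open Real
open scoped Quaternion

/-- The pure quaternion `cos t · i + sin t · j`. -/
noncomputable def quatIJ (t : ℝ) : ℍ[ℝ] := ⟨0, Real.cos t, Real.sin t, 0⟩

/-!
For pure quaternions `u`, `v` with `u² = v² = -1` one has `(1 - v u) u = u + v = v (1 - v u)`,
and `1 - v u` vanishes only when `v = -u`; so conjugation by `1 - v u` (suitably normalised)
takes `u` to `v`. Applied to `u = i`, `v = p` this gives `A₁` with `A₁ i A₁⁻¹ = p` (for
`p = -i` take `A₁ = j = quatIJ (π / 2)`). The pure unit quaternion
`q' = A₁⁻¹ q A₁ = c i + d j + e k` has `c = cos t` for `t = arccos c ∈ [0, π]`, and then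
`sin t = √(d² + e²)`; the quaternion `B = e + (sin t - d) i` commutes with `i` and rotates
`sin t · j` to `d j + e k`, so `A₁ B / ‖A₁ B‖` works.
-/

section Ring

variable {R : Type*} [Ring R] {u v : R}

theorem one_sub_mul_mul_eq_mul_one_sub_mul (hu : u * u = -1) (hv : v * v = -1) :
    (1 - v * u) * u = v * (1 - v * u) := by
  rw [sub_mul, mul_sub, mul_assoc, hu, ← mul_assoc, hv]
  noncomm_ring

theorem one_sub_mul_ne_zero (hu : u * u = -1) (h : v ≠ -u) : 1 - v * u ≠ 0 := by
  intro h0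
  have hvu : v * u = 1 := (sub_eq_zero.1 h0).symm
  apply h
  calc v = v * (u * -u) := by rw [mul_neg, hu, neg_neg, mul_one]
    _ = -u := by rw [← mul_assoc, hvu, one_mul]

end Ring

namespace Quaternion

theorem mul_self_eq_neg_one {x : ℍ[ℝ]} (hre : x.re = 0) (hx : ‖x‖ = 1) : x * x = -1 := by
  rw [← sq, sq_eq_neg_normSq.2 hre, normSq_eq_norm_mul_self, hx, mul_one, coe_one]

theorem imI_sq_add_imJ_sq_add_imK_sq {x : ℍ[ℝ]} (hre : x.re = 0) (hx : ‖x‖ = 1) :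
    x.imI ^ 2 + x.imJ ^ 2 + x.imK ^ 2 = 1 := by
  have h := normSq_eq_norm_mul_self x
  rw [normSq_def', hx, hre] at h
  linarith

theorem re_mul_comm (x y : ℍ[ℝ]) : (x * y).re = (y * x).re := by
  simp only [re_mul]
  ring

theorem re_inv_mul_mul {A : ℍ[ℝ]} (hA : A ≠ 0) (x : ℍ[ℝ]) : (A⁻¹ * x * A).re = x.re := by
  rw [re_mul_comm, ← mul_assoc, mul_inv_cancel₀ hA, one_mul]

theorem norm_inv_mul_mul {A : ℍ[ℝ]} (hA : A ≠ 0) (x : ℍ[ℝ]) : ‖A⁻¹ * x * A‖ = ‖x‖ := by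
  rw [norm_mul, norm_mul, norm_inv]
  field_simp [norm_ne_zero_iff.2 hA]

theorem smul_inv_norm_mul_mul_inv {A x y : ℍ[ℝ]} (hA : A ≠ 0) (h : A * x = y * A) :
    (‖A‖⁻¹ • A) * x * (‖A‖⁻¹ • A)⁻¹ = y := by
  refine (mul_inv_eq_iff_eq_mul₀ (smul_ne_zero (inv_ne_zero (norm_ne_zero_iff.2 hA)) hA)).2 ?_
  rw [smul_mul_assoc, h, mul_smul_comm]

end Quaternion

open Quaternion

@[simp] theorem quatI_re : quatI.re = 0 := rfl
@[simp] theorem quatI_imI : quatI.imI = 1 := rfl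
@[simp] theorem quatI_imJ : quatI.imJ = 0 := rfl
@[simp] theorem quatI_imK : quatI.imK = 0 := rfl

@[simp] theorem quatIJ_re (t : ℝ) : (quatIJ t).re = 0 := rfl
@[simp] theorem quatIJ_imI (t : ℝ) : (quatIJ t).imI = cos t := rfl
@[simp] theorem quatIJ_imJ (t : ℝ) : (quatIJ t).imJ = sin t := rfl
@[simp] theorem quatIJ_imK (t : ℝ) : (quatIJ t).imK = 0 := rfl

theorem quatI_mul_self : quatI * quatI = -1 := by
  ext <;> simp [re_mul, imI_mul, imJ_mul, imK_mul]

theorem exists_ne_zero_mul_quatI_eq {p : ℍ[ℝ]} (hre : p.re = 0) (hp : ‖p‖ = 1) :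
    ∃ A : ℍ[ℝ], A ≠ 0 ∧ A * quatI = p * A := by
  by_cases h : p = -quatI
  · refine ⟨quatIJ (π / 2), fun h0 => by simpa using congrArg (·.imJ) h0, ?_⟩
    subst h
    ext <;> simp [re_mul, imI_mul, imJ_mul, imK_mul]
  · exact ⟨1 - p * quatI, one_sub_mul_ne_zero quatI_mul_self h,
      one_sub_mul_mul_eq_mul_one_sub_mul quatI_mul_self (mul_self_eq_neg_one hre hp)⟩

theorem commute_coe_add_smul_quatI (a b : ℝ) : Commute ((a : ℍ[ℝ]) + b • quatI) quatI :=
  (coe_commute a quatI).add_left ((Commute.refl quatI).smul_left b)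

theorem coe_add_smul_quatI_ne_zero {a b : ℝ} (h : ¬(a = 0 ∧ b = 0)) :
    (a : ℍ[ℝ]) + b • quatI ≠ 0 :=
  fun h0 => h ⟨by simpa using congrArg (·.re) h0, by simpa using congrArg (·.imI) h0⟩

theorem coe_add_smul_quatI_mul_quatIJ {q : ℍ[ℝ]} {t : ℝ} (hre : q.re = 0)
    (hcos : cos t = q.imI) (hsin : sin t ^ 2 = q.imJ ^ 2 + q.imK ^ 2) :
    ((q.imK : ℍ[ℝ]) + (sin t - q.imJ) • quatI) * quatIJ t =
      q * ((q.imK : ℍ[ℝ]) + (sin t - q.imJ) • quatI) := by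
  ext <;>
    simp only [re_mul, imI_mul, imJ_mul, imK_mul, re_add, imI_add, imJ_add, imK_add, re_coe,
      imI_coe, imJ_coe, imK_coe, re_smul, imI_smul, imJ_smul, imK_smul, smul_eq_mul, quatI_re,
      quatI_imI, quatI_imJ, quatI_imK, quatIJ_re, quatIJ_imI, quatIJ_imJ, quatIJ_imK, hre, hcos] <;>
    linarith

theorem exists_mem_Icc_commute_quatI_mul_quatIJ_eq {q : ℍ[ℝ]} (hre : q.re = 0) (hq : ‖q‖ = 1) :
    ∃ t ∈ Set.Icc (0 : ℝ) π, ∃ B : ℍ[ℝ], B ≠ 0 ∧ Commute B quatI ∧ B * quatIJ t = q * B := by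
  have hsum := imI_sq_add_imJ_sq_add_imK_sq hre hq
  set t := arccos q.imI
  have hcos : cos t = q.imI := cos_arccos (by nlinarith) (by nlinarith)
  have hsin : sin t ^ 2 = q.imJ ^ 2 + q.imK ^ 2 := by rw [sin_sq, hcos]; linarith
  refine ⟨t, ⟨arccos_nonneg _, arccos_le_pi _⟩, ?_⟩
  by_cases h : q.imK = 0 ∧ sin t - q.imJ = 0
  · refine ⟨1, one_ne_zero, Commute.one_left _, ?_⟩
    rw [one_mul, mul_one]
    ext <;> simp [hre, hcos, h.1, ← sub_eq_zero.1 h.2]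
  · exact ⟨_, coe_add_smul_quatI_ne_zero h, commute_coe_add_smul_quatI _ _,
      coe_add_smul_quatI_mul_quatIJ hre hcos hsin⟩

/-- For any two pure unit quaternions `p` and `q`, there are a unit quaternion `A`
and `t ∈ [0, π]` with `A i A⁻¹ = p` and `A(cos t · i + sin t · j)A⁻¹ = q`. -/
theorem stmt14 (p q : ℍ[ℝ]) (hp0 : p.re = 0) (hp : ‖p‖ = 1)
    (hq0 : q.re = 0) (hq : ‖q‖ = 1) :
    ∃ A : ℍ[ℝ], ‖A‖ = 1 ∧ ∃ t ∈ Set.Icc (0 : ℝ) π,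
      A * quatI * A⁻¹ = p ∧ A * quatIJ t * A⁻¹ = q := by
  obtain ⟨A, hA, hAi⟩ := exists_ne_zero_mul_quatI_eq hp0 hp
  obtain ⟨t, ht, B, hB, hBi, hBt⟩ := exists_mem_Icc_commute_quatI_mul_quatIJ_eq
    (by rw [re_inv_mul_mul hA, hq0]) (by rw [norm_inv_mul_mul hA, hq])
  have hAB : A * B ≠ 0 := mul_ne_zero hA hB
  refine ⟨‖A * B‖⁻¹ • (A * B), norm_smul_inv_norm hAB, t, ht,
    smul_inv_norm_mul_mul_inv hAB ?_, smul_inv_norm_mul_mul_inv hAB ?_⟩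
  · rw [mul_assoc, hBi.eq, ← mul_assoc, hAi, mul_assoc]
  · rw [mul_assoc, hBt, ← mul_assoc, ← mul_assoc, ← mul_assoc, mul_inv_cancel₀ hA, one_mul,
      mul_assoc]
end

section
/- The total Dubois torsion of the trefoil knot equals 4π/3; concretely, ∫₀^π (2 sin(π/3) sin(t)) / √(cos²(π/3) + sin²(π/3) sin²(t)) dt = 4π/3. -/
/-!
On the arc, `cos² (π/3) + sin² (π/3) sin² t = 1 - (sin (π/3) cos t)²`, so with `k = sin (π/3)` the
integrand is `2 k sin t / √(1 - k² cos² t)`, the derivative of `-2 arcsin (k cos t)`. The integral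
over `[0, π]` is therefore `4 arcsin k = 4π/3`.
-/

open Real

namespace Real

lemma cos_sq_add_sin_sq_mul_sin_sq (α t : ℝ) :
    cos α ^ 2 + sin α ^ 2 * sin t ^ 2 = 1 - (sin α * cos t) ^ 2 := by
  linear_combination sin α ^ 2 * sin_sq_add_cos_sq t + sin_sq_add_cos_sq α

section

variable {k : ℝ} (hk : |k| < 1)
include hk

lemma one_sub_sq_mul_cos_pos (t : ℝ) : 0 < 1 - (k * cos t) ^ 2 := by
  have hk2 : k ^ 2 < 1 := by simpa using sq_lt_sq.mpr (hk.trans_eq abs_one.symm)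
  have : (k * cos t) ^ 2 ≤ k ^ 2 := by
    rw [mul_pow]
    exact mul_le_of_le_one_right (sq_nonneg k) (cos_sq_le_one t)
  linarith

lemma hasDerivAt_arcsin_mul_cos (t : ℝ) :
    HasDerivAt (fun u => -2 * arcsin (k * cos u))
      (2 * k * sin t / √(1 - (k * cos t) ^ 2)) t := by
  have hpos := one_sub_sq_mul_cos_pos hk t
  have hne_neg_one : k * cos t ≠ -1 := fun h => by norm_num [h] at hpos
  have hne_one : k * cos t ≠ 1 := fun h => by norm_num [h] at hpos
  have hsqrt : √(1 - (k * cos t) ^ 2) ≠ 0 := (sqrt_pos.mpr hpos).ne'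
  refine (((hasDerivAt_arcsin hne_neg_one hne_one).comp t
    ((hasDerivAt_cos t).const_mul k)).const_mul (-2)).congr_deriv ?_
  field_simp

lemma integral_sin_div_sqrt_one_sub_sq_mul_cos :
    ∫ t in (0 : ℝ)..π, 2 * k * sin t / √(1 - (k * cos t) ^ 2) = 4 * arcsin k := by
  have hcont : Continuous fun t => 2 * k * sin t / √(1 - (k * cos t) ^ 2) :=
    Continuous.div (by fun_prop) (by fun_prop)
      fun t => (sqrt_pos.mpr (one_sub_sq_mul_cos_pos hk t)).ne'
  rw [intervalIntegral.integral_eq_sub_of_hasDerivAt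
    (fun t _ => hasDerivAt_arcsin_mul_cos hk t) (hcont.intervalIntegrable 0 π)]
  simp only [cos_pi, cos_zero, mul_neg, mul_one, arcsin_neg]
  ring

end

end Real

/-- The total Dubois torsion of the trefoil knot equals `4π/3`. -/
theorem stmt17 :
    ∫ t in (0 : ℝ)..π,
      (2 * Real.sin (π / 3) * Real.sin t) /
        Real.sqrt (Real.cos (π / 3) ^ 2 + Real.sin (π / 3) ^ 2 * Real.sin t ^ 2)
      = 4 * π / 3 := by
  have hk : |sin (π / 3)| < 1 := by
    rw [sin_pi_div_three, abs_of_pos (by positivity)]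
    nlinarith [sq_sqrt (show (0 : ℝ) ≤ 3 by norm_num), sqrt_nonneg 3]
  have harcsin : arcsin (sin (π / 3)) = π / 3 :=
    arcsin_sin (by linarith [pi_pos]) (by linarith [pi_pos])
  simp only [cos_sq_add_sin_sq_mul_sin_sq]
  rw [integral_sin_div_sqrt_one_sub_sq_mul_cos hk, harcsin]
  ring
end

section
/- For every t ∈ ℝ and all real numbers a₁, …, a₆, the 6 × 6 real matrix with rows (0, 0, 0, 0, 1, 0), (0, −2, 0, 0, 0, 0), (0, 0, −2, 0, 0, 0), (−3/2 + (3/2)cos²(t), a₁, a₂, −(√3/4) sin(t), 0, cos(t)), ((3/2) sin(t) cos(t), a₃, a₄, (√3/4) cos(t), 0, sin(t)), (−(√3/2) sin(t), a₅, a₆, 3/4, 0, 0) has determinant of absolute value 6·|sin(t)|; in particular the determinant does not depend on a₁, …, a₆. -/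
open Real

-- Laplace expansion along the first three rows; the sign is `+1` since the leftover
-- column permutation `0 ↦ 4 ↦ 3 ↦ 0` is a 3-cycle.
theorem Matrix.det_fin_six_of_sparse_rows {R : Type*} [CommRing R]
    (d e a₁ a₂ a₃ a₄ a₅ a₆ p₁ p₂ p₃ q₁ q₂ q₃ r₁ r₂ r₃ : R) :
    Matrix.det !![0, 0, 0, 0, 1, 0;
                  0, d, 0, 0, 0, 0;
                  0, 0, e, 0, 0, 0;
                  p₁, a₁, a₂, q₁, 0, r₁;
                  p₂, a₃, a₄, q₂, 0, r₂;
                  p₃, a₅, a₆, q₃, 0, r₃] =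
      d * e * Matrix.det !![p₁, q₁, r₁; p₂, q₂, r₂; p₃, q₃, r₃] := by
  simp [Matrix.det_succ_row_zero, Fin.sum_univ_succ, Fin.succAbove, Fin.castSucc,
    Fin.castAdd, Fin.castLE]
  ring

theorem det_trefoil_torsion_minor (t : ℝ) :
    Matrix.det !![-3/2 + 3/2 * cos t ^ 2, -(√3 / 4) * sin t, cos t;
                  3/2 * sin t * cos t, (√3 / 4) * cos t, sin t;
                  -(√3 / 2) * sin t, 3/4, 0] = 3/2 * sin t := by
  have hsqrt : √3 ^ 2 = 3 := Real.sq_sqrt (by norm_num)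
  rw [Matrix.det_fin_three]
  simp only [Matrix.of_apply, Matrix.cons_val', Matrix.cons_val_zero, Matrix.cons_val_one,
    Matrix.cons_val_two, Matrix.empty_val', Matrix.cons_val_fin_one, Matrix.head_cons,
    Matrix.tail_cons, Matrix.head_fin_const]
  linear_combination (3/8 * sin t) * sin_sq_add_cos_sq t
    + ((cos t ^ 2 + sin t ^ 2) * sin t / 8) * hsqrt

/-- The change-of-basis matrix arising in the Dubois torsion computation for the
trefoil knot has determinant of absolute value `6|sin t|`, independently of the
unspecified (starred) entries `a₁, …, a₆`. -/
theorem stmt18 (t a₁ a₂ a₃ a₄ a₅ a₆ : ℝ) :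
    |(Matrix.det
      !![0, 0, 0, 0, 1, 0;
         0, -2, 0, 0, 0, 0;
         0, 0, -2, 0, 0, 0;
         -3/2 + 3/2 * Real.cos t ^ 2, a₁, a₂, -(Real.sqrt 3 / 4) * Real.sin t, 0, Real.cos t;
         3/2 * Real.sin t * Real.cos t, a₃, a₄, (Real.sqrt 3 / 4) * Real.cos t, 0, Real.sin t;
         -(Real.sqrt 3 / 2) * Real.sin t, a₅, a₆, 3/4, 0, 0])| = 6 * |Real.sin t| := by
  rw [Matrix.det_fin_six_of_sparse_rows, det_trefoil_torsion_minor, abs_mul, abs_mul]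
  norm_num
  ring
end
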